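/- arXiv:1503.06164 — 2 statements merged into one kernel-verified Lean document; each statement's English description precedes it below -/
import Mathlib

section
/- Let G be a finite abelian group with D(G) ≥ 4. The following are equivalent: (a) there exists a positive integer k* such that ρ_{2k*+1}(G) = k*·D(G) + ⌊D(G)/2⌋; (b) there exists a positive integer k* such that ρ_{2k+1}(G) = k·D(G) + ⌊D(G)/2⌋ for every k ≥ k*. -/
/-- A minimal zero-sum sequence (atom) over `G`: a nontrivial multiset summing to zero,
no proper nontrivial sub-multiset of which sums to zero. -/
def MinZeroSum {G : Type*} [AddCommGroup G] (S : Multiset G) : Prop :=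
  S ≠ 0 ∧ S.sum = 0 ∧ ∀ T : Multiset G, T ≤ S → T ≠ 0 → T ≠ S → T.sum ≠ 0

/-- `rho G k` is the largest `m` such that some product of `k` atoms over `G`
equals a product of `m` atoms. -/
noncomputable def rho (G : Type*) [AddCommGroup G] (k : ℕ) : ℕ :=
  sSup {m : ℕ | ∃ (U : Fin k → Multiset G) (V : Fin m → Multiset G),
    (∀ i, MinZeroSum (U i)) ∧ (∀ j, MinZeroSum (V j)) ∧
    (∑ i, U i) = (∑ j, V j)}

/-- The Davenport constant of `G`: the maximal length of a minimal zero-sum sequence. -/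
noncomputable def DavC (G : Type*) [AddCommGroup G] : ℕ :=
  sSup {l : ℕ | ∃ S : Multiset G, MinZeroSum S ∧ Multiset.card S = l}

/-!
The upper bound comes from weighing a multiset `S` by `|S| + v₀(S)`, where `v₀` counts zeros.
This weight is additive, at least `2` on every atom, and at most `D(G)` on every atom once
`D(G) ≥ 2` (the atom `0` has weight `2`; the others contain no zero). Comparing the weights of
the two sides of `U₁ ⋯ U_k = V₁ ⋯ V_m` gives `2 m ≤ k D(G)`, so
`ρ_{2k+1}(G) ≤ k D(G) + ⌊D(G)/2⌋`.
Conversely, for an atom `W` of length `D(G)`, `W · (-W)` is a product of `D(G)` atoms `g (-g)`,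
so multiplying a factorization by `W · (-W)` turns `2k+1` atoms into `2k+3` and adds `D(G)`
atoms on the other side. Hence once the bound is attained at `2k*+1`, it is attained at every
larger odd length.
-/

section

open Multiset

variable {G : Type*} [AddCommGroup G]

theorem List.exists_infix_sum_eq_zero_of_card_lt [Fintype G] (l : List G)
    (hl : Fintype.card G < l.length) :
    ∃ t, t <:+: l ∧ t ≠ [] ∧ t.length < l.length ∧ t.sum = 0 := by
  obtain ⟨i, j, hij, hsum⟩ := Fintype.exists_ne_map_eq_of_card_lt
    (fun i : Fin l.length => (l.take i).sum) (by simpa using hl)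
  wlog hlt : (i : ℕ) < j generalizing i j
  · exact this j i hij.symm hsum.symm (by omega)
  refine ⟨(l.take j).drop i, (List.drop_suffix _ _).isInfix.trans (List.take_prefix _ _).isInfix,
    ?_, ?_, ?_⟩
  · simp only [ne_eq, List.drop_eq_nil_iff, List.length_take]
    omega
  · simp only [List.length_drop, List.length_take]
    omega
  · have h := List.sum_take_add_sum_drop (l.take j) i
    rw [List.take_take, min_eq_left hlt.le, hsum] at h
    exact left_eq_add.mp h.symm

theorem Multiset.sum_map_pair_neg (S : Multiset G) :
    (S.map fun g => ({g, -g} : Multiset G)).sum = S + S.map Neg.neg := by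
  simp only [insert_eq_cons, ← singleton_add, sum_map_add, sum_map_singleton]
  rw [← sum_map_singleton (S.map Neg.neg), map_map]
  rfl

theorem minZeroSum_singleton_zero : MinZeroSum ({0} : Multiset G) :=
  ⟨singleton_ne_zero 0, sum_singleton 0, fun _ hT hT0 hTS _ =>
    (le_singleton.mp hT).elim hT0 hTS⟩

theorem minZeroSum_pair {g : G} (hg : g ≠ 0) : MinZeroSum {g, -g} := by
  refine ⟨by simp, by simp, fun T hT hT0 hTS => ?_⟩
  have hcard : card T ≤ 2 := by simpa using card_le_card hT
  have hcard2 : card T ≠ 2 := fun h2 => hTS (eq_of_le_of_card_le hT (by simp [h2]))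
  have hcard0 : card T ≠ 0 := by simpa [card_eq_zero] using hT0
  obtain ⟨x, rfl⟩ := card_eq_one.mp (by omega : card T = 1)
  have hx : x ∈ ({g, -g} : Multiset G) := mem_of_le hT (mem_singleton_self x)
  simp only [insert_eq_cons, mem_cons, mem_singleton] at hx
  rcases hx with rfl | rfl <;> simpa using hg

namespace MinZeroSum

variable {S : Multiset G}

theorem eq_singleton_zero_of_zero_mem (h : MinZeroSum S) (h0 : (0 : G) ∈ S) : S = {0} := by
  by_contra hne
  exact h.2.2 {0} (singleton_le.mpr h0) (singleton_ne_zero 0) (Ne.symm hne) (sum_singleton 0)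

theorem map_addEquiv {H : Type*} [AddCommGroup H] (h : MinZeroSum S) (e : G ≃+ H) :
    MinZeroSum (S.map e) := by
  obtain ⟨hne, hsum, hmin⟩ := h
  refine ⟨by simpa using hne, by rw [← map_multiset_sum, hsum, _root_.map_zero], ?_⟩
  intro T hT hT0 hTS hTsum
  have hpull : (T.map e.symm).map e = T := by simp
  refine hmin (T.map e.symm) ?_ (by simpa using hT0) ?_ ?_
  · simpa [Function.comp_def] using map_le_map (f := e.symm) hT
  · rintro rfl
    exact hTS hpull.symm
  · rw [← map_multiset_sum, hTsum, _root_.map_zero]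

theorem two_le_card_add_count_zero [DecidableEq G] (h : MinZeroSum S) :
    2 ≤ card S + count 0 S := by
  by_cases h0 : (0 : G) ∈ S
  · simp [h.eq_singleton_zero_of_zero_mem h0]
  have hcard0 : card S ≠ 0 := by simpa [card_eq_zero] using h.1
  have hcard1 : card S ≠ 1 := by
    intro h1
    obtain ⟨x, rfl⟩ := card_eq_one.mp h1
    exact h0 (by simpa using h.2.1.symm)
  omega

theorem card_le_card_group [Fintype G] (h : MinZeroSum S) : card S ≤ Fintype.card G := by
  by_contra! hlt
  obtain ⟨t, hinfix, ht0, hlen, hsum⟩ :=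
    S.toList.exists_infix_sum_eq_zero_of_card_lt (by simpa using hlt)
  refine h.2.2 t ?_ (by simpa using ht0) ?_ (by simpa using hsum)
  · rw [← coe_toList S]
    exact coe_le.mpr hinfix.sublist.subperm
  · rintro rfl
    simp at hlen

end MinZeroSum

theorem bddAbove_card_minZeroSum [Fintype G] :
    BddAbove {l : ℕ | ∃ S : Multiset G, MinZeroSum S ∧ card S = l} :=
  ⟨Fintype.card G, fun _ ⟨_, hS, hl⟩ => hl ▸ hS.card_le_card_group⟩

theorem MinZeroSum.card_le_davC [Fintype G] {S : Multiset G} (h : MinZeroSum S) :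
    card S ≤ DavC G :=
  le_csSup bddAbove_card_minZeroSum ⟨S, h, rfl⟩

theorem exists_minZeroSum_card_eq_davC [Fintype G] :
    ∃ S : Multiset G, MinZeroSum S ∧ card S = DavC G :=
  Nat.sSup_mem (s := {l : ℕ | ∃ S : Multiset G, MinZeroSum S ∧ card S = l})
    ⟨1, {0}, minZeroSum_singleton_zero, card_singleton 0⟩ bddAbove_card_minZeroSum

theorem MinZeroSum.card_add_count_zero_le_davC [Fintype G] [DecidableEq G] {S : Multiset G}
    (h : MinZeroSum S) (hD : 2 ≤ DavC G) : card S + count 0 S ≤ DavC G := by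
  by_cases h0 : (0 : G) ∈ S
  · simpa [h.eq_singleton_zero_of_zero_mem h0] using hD
  · simpa [count_eq_zero.mpr h0] using h.card_le_davC

variable (G) in
/-- The set whose supremum is `rho G k`. -/
def rhoSet (k : ℕ) : Set ℕ :=
  {m : ℕ | ∃ (U : Fin k → Multiset G) (V : Fin m → Multiset G),
    (∀ i, MinZeroSum (U i)) ∧ (∀ j, MinZeroSum (V j)) ∧ (∑ i, U i) = (∑ j, V j)}

theorem self_mem_rhoSet (n : ℕ) : n ∈ rhoSet G n :=
  ⟨fun _ => {0}, fun _ => {0}, fun _ => minZeroSum_singleton_zero,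
    fun _ => minZeroSum_singleton_zero, rfl⟩

theorem add_mem_rhoSet {n n' m m' : ℕ} (hm : m ∈ rhoSet G n) (hm' : m' ∈ rhoSet G n') :
    m + m' ∈ rhoSet G (n + n') := by
  obtain ⟨U, V, hU, hV, hUV⟩ := hm
  obtain ⟨U', V', hU', hV', hUV'⟩ := hm'
  refine ⟨Fin.append U U', Fin.append V V', Fin.addCases (by simpa using hU) (by simpa using hU'),
    Fin.addCases (by simpa using hV) (by simpa using hV'), ?_⟩
  simp [Fin.sum_univ_add, hUV, hUV']

theorem MinZeroSum.card_mem_rhoSet_two {S : Multiset G} (hS : MinZeroSum S)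
    (h0 : (0 : G) ∉ S) : card S ∈ rhoSet G 2 := by
  rw [← length_toList]
  have hmem (i : Fin S.toList.length) : S.toList[(i : ℕ)] ∈ S := mem_toList.mp (List.getElem_mem _)
  refine ⟨![S, S.map (AddEquiv.neg G)], fun i => {S.toList[(i : ℕ)], -S.toList[(i : ℕ)]}, ?_,
    fun i => minZeroSum_pair (ne_of_mem_of_not_mem (hmem i) h0), ?_⟩
  · intro i
    fin_cases i
    exacts [hS, hS.map_addEquiv (AddEquiv.neg G)]
  · beta_reduce
    rw [Fin.sum_univ_two, Fin.sum_univ_fun_getElem S.toList (fun g => ({g, -g} : Multiset G)),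
      ← sum_coe, ← map_coe, coe_toList, sum_map_pair_neg]
    rfl

theorem two_mul_le_of_mem_rhoSet [Fintype G] (hD : 2 ≤ DavC G) {n m : ℕ}
    (hm : m ∈ rhoSet G n) : 2 * m ≤ n * DavC G := by
  classical
  obtain ⟨U, V, hU, hV, hUV⟩ := hm
  let weight : Multiset G →+ ℕ := cardHom + countAddMonoidHom 0
  calc 2 * m = ∑ _ : Fin m, 2 := by simp [mul_comm]
    _ ≤ ∑ j, weight (V j) := Finset.sum_le_sum fun j _ => (hV j).two_le_card_add_count_zero
    _ = ∑ i, weight (U i) := by rw [← map_sum, ← map_sum, hUV]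
    _ ≤ ∑ _ : Fin n, DavC G := Finset.sum_le_sum fun i _ => (hU i).card_add_count_zero_le_davC hD
    _ = n * DavC G := by simp

theorem bddAbove_rhoSet [Fintype G] (hD : 2 ≤ DavC G) (n : ℕ) : BddAbove (rhoSet G n) :=
  ⟨n * DavC G, fun _ hm => by have := two_mul_le_of_mem_rhoSet hD hm; omega⟩

theorem rho_mem_rhoSet [Fintype G] (hD : 2 ≤ DavC G) (n : ℕ) : rho G n ∈ rhoSet G n :=
  Nat.sSup_mem ⟨n, self_mem_rhoSet n⟩ (bddAbove_rhoSet hD n)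

theorem le_rho_of_mem_rhoSet [Fintype G] (hD : 2 ≤ DavC G) {n m : ℕ} (hm : m ∈ rhoSet G n) :
    m ≤ rho G n :=
  le_csSup (bddAbove_rhoSet hD n) hm

theorem rho_two_mul_add_one_le [Fintype G] (hD : 2 ≤ DavC G) (k : ℕ) :
    rho G (2 * k + 1) ≤ k * DavC G + DavC G / 2 := by
  have h := two_mul_le_of_mem_rhoSet hD (rho_mem_rhoSet hD (2 * k + 1))
  rw [add_mul, mul_assoc, one_mul] at h
  omega

theorem add_mul_davC_mem_rhoSet [Fintype G] (hD : 2 ≤ DavC G) {n m : ℕ}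
    (hm : m ∈ rhoSet G n) (d : ℕ) : m + d * DavC G ∈ rhoSet G (n + 2 * d) := by
  obtain ⟨W, hW, hWcard⟩ := exists_minZeroSum_card_eq_davC (G := G)
  have hW0 : (0 : G) ∉ W := fun h0 => by
    simp [hW.eq_singleton_zero_of_zero_mem h0, ← hWcard] at hD
  induction d with
  | zero => simpa using hm
  | succ d ih =>
    have h := add_mem_rhoSet ih (hWcard ▸ hW.card_mem_rhoSet_two hW0)
    rwa [show m + (d + 1) * DavC G = m + d * DavC G + DavC G by ring,
      show n + 2 * (d + 1) = n + 2 * d + 2 by ring]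

end

theorem stmt5 {G : Type*} [AddCommGroup G] [Fintype G]
    (hD : 4 ≤ DavC G) :
    (∃ k : ℕ, 0 < k ∧ rho G (2 * k + 1) = k * DavC G + DavC G / 2) ↔
    (∃ k₀ : ℕ, 0 < k₀ ∧ ∀ k : ℕ, k₀ ≤ k →
        rho G (2 * k + 1) = k * DavC G + DavC G / 2) := by
  have hD2 : 2 ≤ DavC G := by omega
  refine ⟨fun ⟨k, hk, hattained⟩ => ⟨k, hk, fun k' hk' => ?_⟩,
    fun ⟨k₀, hk₀, hall⟩ => ⟨k₀, hk₀, hall k₀ le_rfl⟩⟩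
  obtain ⟨d, rfl⟩ := Nat.exists_eq_add_of_le hk'
  have hmem := add_mul_davC_mem_rhoSet hD2 (hattained ▸ rho_mem_rhoSet hD2 (2 * k + 1)) d
  rw [show 2 * k + 1 + 2 * d = 2 * (k + d) + 1 by ring] at hmem
  refine le_antisymm (rho_two_mul_add_one_le hD2 _) ?_
  calc (k + d) * DavC G + DavC G / 2 = k * DavC G + DavC G / 2 + d * DavC G := by ring
    _ ≤ rho G (2 * (k + d) + 1) := le_rho_of_mem_rhoSet hD2 hmem
end

section
/- Let G = C_n^3 with n ≥ 2, so that D*(G) = 3n − 2. Then there exist minimal zero-sum sequences U_1, U_2, U_3 over G whose product U_1·U_2·U_3 admits a factorization into (3n−2) + ⌊(3n−2)/2⌋ minimal zero-sum sequences such that: if n is odd, exactly one of these atoms has length 3 (containing exactly one term from each of U_1, U_2, U_3) and all others have length 2; and if n is even, all of these atoms have length 2. In particular, ρ_3(C_n^3) ≥ D*(G) + ⌊D*(G)/2⌋. -/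
/-- The product `U 0 + U 1 + U 2` of three sequences admits a factorization into `m`
minimal zero-sum sequences, of which exactly `r` have length `3` and contain exactly one
term from each `U i`, while all the others have length `2`.  The map `T` records,
for each atom of the factorization, its portion coming from each `U i`. -/
def TraversalFactorization {G : Type*} [AddCommGroup G]
    (U : Fin 3 → Multiset G) (m r : ℕ) : Prop :=
  ∃ (W : Fin m → Multiset G) (T : Fin m → Fin 3 → Multiset G) (J : Finset (Fin m)),
    (∀ j, MinZeroSum (W j)) ∧
    (∀ j, W j = T j 0 + T j 1 + T j 2) ∧
    (∀ i, U i = ∑ j, T j i) ∧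
    J.card = r ∧
    (∀ j ∈ J, Multiset.card (W j) = 3 ∧ ∀ i, Multiset.card (T j i) = 1) ∧
    (∀ j ∉ J, Multiset.card (W j) = 2)

/-!
Over `(ZMod n)³` put `Uᵢ = uᵢ^(n-1) wᵢ^(n-1) Cᵢ`, where `uᵢ, wᵢ` are (signed) unit vectors
and the `n` terms of `Cᵢ` lie on an affine coordinate hyperplane `φ = 1`. Since `φ` counts the
terms of `Cᵢ` modulo `n`, a zero-sum subsequence takes none or all of `Cᵢ`, and then the other
two coordinates force it to be empty or all of `Uᵢ`; so each `Uᵢ` is an atom. The vectors are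
chosen so that every term of one `Uᵢ` has its negative in another: the unit vectors give
`3(n-1)` atoms `x · (-x)`, and `Cᵢ` supplies `⌊n/2⌋` more pairs with each other `Cⱼ`, except
that for odd `n` one term of each `Cᵢ` is left over, these three forming an atom of length `3`.
Atoms over a finite group have bounded length, so `ρ₃` is a finite supremum and the
factorization bounds it from below.
-/

open Multiset

section Atoms

variable {G : Type*} [AddCommGroup G]

theorem minZeroSum_of_card_le_three {S : Multiset G} (hS : S ≠ 0) (hsum : S.sum = 0)
    (hzero : (0 : G) ∉ S) (hcard : card S ≤ 3) : MinZeroSum S := by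
  refine ⟨hS, hsum, fun T hle hT0 hne hT => ?_⟩
  obtain ⟨R, rfl⟩ := Multiset.le_iff_exists_add.mp hle
  have hR0 : R ≠ 0 := by rintro rfl; simp at hne
  have hR : R.sum = 0 := by simpa [hT] using hsum
  have not_single : ∀ X ≤ T + R, X.sum = 0 → card X ≠ 1 := by
    intro X hX hXsum hX1
    obtain ⟨a, rfl⟩ := card_eq_one.mp hX1
    rw [sum_singleton] at hXsum
    exact hzero (hXsum ▸ mem_of_le hX (mem_singleton_self a))
  have := card_pos.mpr hT0
  have := card_pos.mpr hR0
  rw [card_add] at hcard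
  rcases (show card T = 1 ∨ card R = 1 by omega) with h | h
  · exact not_single T (le_add_right _ _) hT h
  · exact not_single R (le_add_left _ _) hR h

theorem MinZeroSum.count_le_addOrderOf [Finite G] [DecidableEq G] {S : Multiset G}
    (h : MinZeroSum S) (g : G) : S.count g ≤ addOrderOf g := by
  by_contra! hlt
  refine h.2.2 (replicate (addOrderOf g) g) (le_count_iff_replicate_le.mp hlt.le) ?_ ?_ ?_
  · rw [Ne, ← card_eq_zero, card_replicate]
    exact (addOrderOf_pos g).ne'
  · rintro rfl
    simp at hlt
  · simp

theorem MinZeroSum.card_le [Fintype G] {S : Multiset G} (h : MinZeroSum S) :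
    card S ≤ ∑ g : G, addOrderOf g := by
  classical
  calc card S = ∑ g ∈ S.toFinset, S.count g := (toFinset_sum_count_eq S).symm
    _ ≤ ∑ g ∈ S.toFinset, addOrderOf g := Finset.sum_le_sum fun g _ => h.count_le_addOrderOf g
    _ ≤ ∑ g : G, addOrderOf g := Finset.sum_le_sum_of_subset (Finset.subset_univ _)

theorem le_rho [Finite G] {k m : ℕ} {U : Fin k → Multiset G} {V : Fin m → Multiset G}
    (hU : ∀ i, MinZeroSum (U i)) (hV : ∀ j, MinZeroSum (V j)) (h : ∑ i, U i = ∑ j, V j) :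
    m ≤ rho G k := by
  have := Fintype.ofFinite G
  refine le_csSup ⟨k * ∑ g : G, addOrderOf g, ?_⟩ ⟨U, V, hU, hV, h⟩
  rintro m' ⟨U', V', hU', hV', h'⟩
  calc m' = ∑ _j : Fin m', 1 := by simp
    _ ≤ ∑ j, card (V' j) := Finset.sum_le_sum fun j _ => card_pos.mpr (hV' j).1
    _ = ∑ i, card (U' i) := by rw [← card_sum, ← card_sum, h']
    _ ≤ ∑ _i : Fin k, ∑ g : G, addOrderOf g := Finset.sum_le_sum fun i _ => (hU' i).card_le
    _ = k * ∑ g : G, addOrderOf g := by simp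

end Atoms

section Sequences

theorem Multiset.exists_eq_add_of_le_add {α : Type*} [DecidableEq α] {T A B : Multiset α}
    (h : T ≤ A + B) : ∃ T₁ ≤ A, ∃ T₂ ≤ B, T = T₁ + T₂ := by
  refine ⟨T ∩ A, inter_le_right .., T - A, ?_, ?_⟩
  · rw [Multiset.sub_le_iff_le_add, add_comm]
    exact h
  · ext a
    simp only [count_add, count_inter, count_sub]
    omega

variable {G : Type*} [AddCommGroup G]

theorem AddMonoidHom.map_sum_eq_card {n : ℕ} (φ : G →+ ZMod n) {D : Multiset G}
    (h : ∀ c ∈ D, φ c = 1) : φ D.sum = card D := by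
  rw [map_multiset_sum, map_congr rfl h, map_const', sum_replicate, nsmul_one]

theorem minZeroSum_replicate_add_replicate_add {n : ℕ} [NeZero n] {u w : G} {C : Multiset G}
    (φ₁ φ₂ φ₃ : G →+ ZMod n) (hu : φ₁ u = 1 ∧ φ₂ u = 0 ∧ φ₃ u = 0)
    (hw : φ₁ w = 0 ∧ φ₂ w = 0 ∧ φ₃ w = 1) (hC : ∀ c ∈ C, φ₂ c = 1) (hCcard : card C = n)
    (hCsum : C.sum = u + w) (hn : n • (u + w) = 0) :
    MinZeroSum (replicate (n - 1) u + replicate (n - 1) w + C) := by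
  classical
  have hpos : 0 < n := Nat.pos_of_neZero n
  have hsum : (n - 1) • u + (n - 1) • w + (u + w) = n • (u + w) := by
    conv_rhs => rw [← Nat.sub_add_cancel hpos]
    rw [succ_nsmul, nsmul_add]
  refine ⟨fun h => by simpa [hCcard, hpos.ne'] using congrArg card h, by simp [hCsum, hsum, hn],
    fun T hT hT0 hTS hTsum => ?_⟩
  obtain ⟨T', hT', D, hD, rfl⟩ := exists_eq_add_of_le_add hT
  obtain ⟨Tu, hTu, Tw, hTw, rfl⟩ := exists_eq_add_of_le_add hT'
  obtain ⟨a, ha, rfl⟩ := le_replicate_iff.mp hTu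
  obtain ⟨b, hb, rfl⟩ := le_replicate_iff.mp hTw
  replace hTsum : a • u + b • w + D.sum = 0 := by simpa using hTsum
  have hφ (φ : G →+ ZMod n) : (a : ZMod n) * φ u + b * φ w + φ D.sum = 0 := by
    simpa [nsmul_eq_mul] using congrArg φ hTsum
  have hDn : n ∣ card D := by
    have := hφ φ₂
    rw [hu.2.1, hw.2.1, φ₂.map_sum_eq_card fun c hc => hC c (mem_of_le hD hc)] at this
    exact (ZMod.natCast_eq_zero_iff _ _).mp (by simpa using this)
  rcases (card D).eq_zero_or_pos with hD0 | hDpos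
  · rw [card_eq_zero.mp hD0] at hφ
    have ha0 := (ZMod.natCast_eq_zero_iff _ _).mp (by simpa [hu.1, hw.1] using hφ φ₁)
    have hb0 := (ZMod.natCast_eq_zero_iff _ _).mp (by simpa [hu.2.2, hw.2.2] using hφ φ₃)
    obtain rfl : a = 0 := Nat.eq_zero_of_dvd_of_lt ha0 (by omega)
    obtain rfl : b = 0 := Nat.eq_zero_of_dvd_of_lt hb0 (by omega)
    exact hT0 (by simp [card_eq_zero.mp hD0])
  · obtain rfl := eq_of_le_of_card_le hD (hCcard ▸ Nat.le_of_dvd hDpos hDn)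
    rw [hCsum] at hφ
    have ha1 := (ZMod.natCast_eq_zero_iff (a + 1) n).mp (by simpa [hu.1, hw.1] using hφ φ₁)
    have hb1 := (ZMod.natCast_eq_zero_iff (b + 1) n).mp (by simpa [hu.2.2, hw.2.2] using hφ φ₃)
    obtain rfl : a = n - 1 := by have := Nat.le_of_dvd a.succ_pos ha1; omega
    obtain rfl : b = n - 1 := by have := Nat.le_of_dvd b.succ_pos hb1; omega
    exact hTS rfl

end Sequences

section Factorizations

variable {G : Type*} [AddCommGroup G] {U U' : Fin 3 → Multiset G} {m m' r r' : ℕ}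

namespace TraversalFactorization

theorem exists_sum_eq (h : TraversalFactorization U m r) :
    ∃ W : Fin m → Multiset G, (∀ j, MinZeroSum (W j)) ∧ ∑ i, U i = ∑ j, W j := by
  obtain ⟨W, T, -, hW, hWT, hUT, -⟩ := h
  refine ⟨W, hW, ?_⟩
  simp only [Fin.sum_univ_three, hUT, hWT, Finset.sum_add_distrib]

theorem le_rho [Finite G] (hU : ∀ i, MinZeroSum (U i)) (h : TraversalFactorization U m r) :
    m ≤ rho G 3 :=
  let ⟨_, hW, hsum⟩ := h.exists_sum_eq
  _root_.le_rho hU hW hsum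

theorem zero : TraversalFactorization (0 : Fin 3 → Multiset G) 0 0 := by
  refine ⟨Fin.elim0, Fin.elim0, ∅, ?_⟩
  simp

theorem add (h : TraversalFactorization U m r) (h' : TraversalFactorization U' m' r') :
    TraversalFactorization (U + U') (m + m') (r + r') := by
  obtain ⟨W, T, J, hW, hWT, hUT, hJ, hJ3, hJ2⟩ := h
  obtain ⟨W', T', J', hW', hWT', hUT', hJ', hJ3', hJ2'⟩ := h'
  refine ⟨Fin.append W W', Fin.append T T', (J.disjSum J').map finSumFinEquiv.toEmbedding,
    Fin.addCases (by simpa using hW) (by simpa using hW'),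
    Fin.addCases (by simpa using hWT) (by simpa using hWT'),
    fun i => by simp [Fin.sum_univ_add, hUT, hUT'], by simp [hJ, hJ'], ?_, ?_⟩ <;>
    refine Fin.addCases (fun j hj => ?_) (fun j hj => ?_) <;>
    simp only [Finset.mem_map_equiv, finSumFinEquiv_symm_apply_castAdd,
      finSumFinEquiv_symm_apply_natAdd, Finset.inl_mem_disjSum, Finset.inr_mem_disjSum] at hj
  · simpa using hJ3 j hj
  · simpa using hJ3' j hj
  · simpa using hJ2 j hj
  · simpa using hJ2' j hj

theorem nsmul (h : TraversalFactorization U m r) (k : ℕ) :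
    TraversalFactorization (k • U) (k * m) (k * r) := by
  induction k with
  | zero => simpa using zero
  | succ k ih => simpa [succ_nsmul, Nat.succ_mul] using ih.add h

theorem of_pair (hU : MinZeroSum (U 0 + U 1 + U 2)) (h2 : card (U 0 + U 1 + U 2) = 2) :
    TraversalFactorization U 1 0 :=
  ⟨fun _ => U 0 + U 1 + U 2, fun _ => U, ∅, fun _ => hU, fun _ => rfl, fun _ => by simp, rfl,
    by simp, fun _ _ => h2⟩

theorem of_transversal (hU : MinZeroSum (U 0 + U 1 + U 2)) (h1 : ∀ i, card (U i) = 1) :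
    TraversalFactorization U 1 1 :=
  ⟨fun _ => U 0 + U 1 + U 2, fun _ => U, Finset.univ, fun _ => hU, fun _ => rfl,
    fun _ => by simp, rfl, fun _ _ => ⟨by simp [h1], h1⟩, by simp⟩

end TraversalFactorization

def pairBlock (i j : Fin 3) (x : G) : Fin 3 → Multiset G :=
  Pi.single i {x} + Pi.single j {-x}

theorem pairBlock_sum (i j : Fin 3) (x : G) :
    pairBlock i j x 0 + pairBlock i j x 1 + pairBlock i j x 2 = {x, -x} := by
  rw [← Fin.sum_univ_three (pairBlock i j x), pairBlock]
  simp [Finset.sum_add_distrib]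

theorem TraversalFactorization.pairBlock (i j : Fin 3) {x : G} (hx : x ≠ 0) :
    TraversalFactorization (pairBlock i j x) 1 0 := by
  refine of_pair ?_ (by simp [pairBlock_sum])
  rw [pairBlock_sum]
  exact minZeroSum_of_card_le_three (by simp) (by simp) (by simp [hx, eq_comm]) (by simp)

theorem TraversalFactorization.transversal {g : Fin 3 → G} (hg : ∀ i, g i ≠ 0)
    (hsum : ∑ i, g i = 0) : TraversalFactorization (fun i => {g i}) 1 1 := by
  refine of_transversal (minZeroSum_of_card_le_three (by simp) ?_ ?_ (by simp)) (by simp)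
  · simpa [Fin.sum_univ_three, add_assoc] using hsum
  · simpa using ⟨(hg 0).symm, (hg 1).symm, (hg 2).symm⟩

end Factorizations

section Construction

variable {G : Type*} [AddCommGroup G]

def pairBlocks (x y z : G) : Fin 3 → Multiset G :=
  pairBlock 0 1 x + pairBlock 0 2 y + pairBlock 1 2 z

theorem TraversalFactorization.pairBlocks {x y z : G} (hx : x ≠ 0) (hy : y ≠ 0) (hz : z ≠ 0) :
    TraversalFactorization (pairBlocks x y z) 3 0 :=
  ((pairBlock 0 1 hx).add (pairBlock 0 2 hy)).add (pairBlock 1 2 hz)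

theorem pairBlocks_zero (x y z : G) : pairBlocks x y z 0 = {x} + {y} := by
  simp [pairBlocks, pairBlock]

theorem pairBlocks_one (x y z : G) : pairBlocks x y z 1 = {-x} + {z} := by
  simp [pairBlocks, pairBlock]

theorem pairBlocks_two (x y z : G) : pairBlocks x y z 2 = {-y} + {-z} := by
  simp [pairBlocks, pairBlock]

variable (n k : ℕ)

abbrev coord (i : Fin 3) : (Fin 3 → ZMod n) →+ ZMod n := Pi.evalAddMonoidHom _ i

def basicBlocks : Fin 3 → Multiset (Fin 3 → ZMod n) :=
  (n - 1) • pairBlocks ![1, 0, 0] ![0, 0, 1] ![0, 1, 0] +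
    k • pairBlocks (G := Fin 3 → ZMod n) ![0, 1, 1] ![1, 1, 0] ![1, 0, -1]

-- The `i`-th vector completes `Cᵢ` to the sum `uᵢ + wᵢ`; the three vectors add up to `0`
-- because `2k + 1 = n`.
def oddTransversal : Fin 3 → Fin 3 → ZMod n :=
  ![![1 - k, 1, 1 - k], ![-k - 1, k + 1, -1], ![-1, k - 1, -k - 1]]

def oddU : Fin 3 → Multiset (Fin 3 → ZMod n) :=
  basicBlocks n k + fun i => {oddTransversal n k i}

def evenU : Fin 3 → Multiset (Fin 3 → ZMod n) :=
  basicBlocks n k + pairBlocks ![(k : ZMod n) + 2, 1, 1] ![1, 1, k + 2] ![1, k + 2, -1]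

theorem oddU_zero : oddU n k 0 = replicate (n - 1) ![1, 0, 0] + replicate (n - 1) ![0, 0, 1] +
    (replicate k ![0, 1, 1] + replicate k ![1, 1, 0] + {oddTransversal n k 0}) := by
  simp only [oddU, basicBlocks, Pi.add_apply, Pi.smul_apply, pairBlocks_zero, smul_add,
    nsmul_singleton]
  abel

theorem oddU_one : oddU n k 1 = replicate (n - 1) (-![1, 0, 0]) + replicate (n - 1) ![0, 1, 0] +
    (replicate k (-![0, 1, 1]) + replicate k ![1, 0, -1] + {oddTransversal n k 1}) := by
  simp only [oddU, basicBlocks, Pi.add_apply, Pi.smul_apply, pairBlocks_one, smul_add,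
    nsmul_singleton]
  abel

theorem oddU_two :
    oddU n k 2 = replicate (n - 1) (-![0, 0, 1]) + replicate (n - 1) (-![0, 1, 0]) +
      (replicate k (-![1, 1, 0]) + replicate k (-![1, 0, -1]) + {oddTransversal n k 2}) := by
  simp only [oddU, basicBlocks, Pi.add_apply, Pi.smul_apply, pairBlocks_two, smul_add,
    nsmul_singleton]
  abel

theorem evenU_zero : evenU n k 0 = replicate (n - 1) ![1, 0, 0] + replicate (n - 1) ![0, 0, 1] +
    (replicate k ![0, 1, 1] + replicate k ![1, 1, 0] + {![(k : ZMod n) + 2, 1, 1]} +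
      {![1, 1, (k : ZMod n) + 2]}) := by
  simp only [evenU, basicBlocks, Pi.add_apply, Pi.smul_apply, pairBlocks_zero, smul_add,
    nsmul_singleton]
  abel

theorem evenU_one : evenU n k 1 = replicate (n - 1) (-![1, 0, 0]) + replicate (n - 1) ![0, 1, 0] +
    (replicate k (-![0, 1, 1]) + replicate k ![1, 0, -1] + {-![(k : ZMod n) + 2, 1, 1]} +
      {![1, (k : ZMod n) + 2, -1]}) := by
  simp only [evenU, basicBlocks, Pi.add_apply, Pi.smul_apply, pairBlocks_one, smul_add,
    nsmul_singleton]
  abel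

theorem evenU_two :
    evenU n k 2 = replicate (n - 1) (-![0, 0, 1]) + replicate (n - 1) (-![0, 1, 0]) +
      (replicate k (-![1, 1, 0]) + replicate k (-![1, 0, -1]) + {-![1, 1, (k : ZMod n) + 2]} +
        {-![1, (k : ZMod n) + 2, -1]}) := by
  simp only [evenU, basicBlocks, Pi.add_apply, Pi.smul_apply, pairBlocks_two, smul_add,
    nsmul_singleton]
  abel

variable {n k}

theorem minZeroSum_oddU (hnk : n = 2 * k + 1) (i : Fin 3) : MinZeroSum (oddU n k i) := by
  have : NeZero n := ⟨by omega⟩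
  have hk : ((2 * k + 1 : ℕ) : ZMod n) = 0 := by rw [← hnk, ZMod.natCast_self]
  push_cast at hk
  refine match i with
    | 0 => oddU_zero n k ▸ minZeroSum_replicate_add_replicate_add (coord n 0) (coord n 1)
      (coord n 2) ?_ ?_ ?_ ?_ ?_ (ZModModule.char_nsmul_eq_zero n _)
    | 1 => oddU_one n k ▸ minZeroSum_replicate_add_replicate_add (-coord n 0) (-coord n 2)
      (coord n 1) ?_ ?_ ?_ ?_ ?_ (ZModModule.char_nsmul_eq_zero n _)
    | 2 => oddU_two n k ▸ minZeroSum_replicate_add_replicate_add (-coord n 2) (-coord n 0)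
      (-coord n 1) ?_ ?_ ?_ ?_ ?_ (ZModModule.char_nsmul_eq_zero n _)
  all_goals simp [oddTransversal, mem_replicate, or_imp, forall_and]
  all_goals grind

theorem minZeroSum_evenU (hnk : n = 2 * k + 2) (i : Fin 3) : MinZeroSum (evenU n k i) := by
  have : NeZero n := ⟨by omega⟩
  have hk : ((2 * k + 2 : ℕ) : ZMod n) = 0 := by rw [← hnk, ZMod.natCast_self]
  push_cast at hk
  refine match i with
    | 0 => evenU_zero n k ▸ minZeroSum_replicate_add_replicate_add (coord n 0) (coord n 1)
      (coord n 2) ?_ ?_ ?_ ?_ ?_ (ZModModule.char_nsmul_eq_zero n _)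
    | 1 => evenU_one n k ▸ minZeroSum_replicate_add_replicate_add (-coord n 0) (-coord n 2)
      (coord n 1) ?_ ?_ ?_ ?_ ?_ (ZModModule.char_nsmul_eq_zero n _)
    | 2 => evenU_two n k ▸ minZeroSum_replicate_add_replicate_add (-coord n 2) (-coord n 0)
      (-coord n 1) ?_ ?_ ?_ ?_ ?_ (ZModModule.char_nsmul_eq_zero n _)
  all_goals simp [mem_replicate, or_imp, forall_and]
  all_goals grind

theorem traversalFactorization_oddU (hn : 1 < n) (hnk : n = 2 * k + 1) :
    TraversalFactorization (oddU n k) ((3 * n - 2) + (3 * n - 2) / 2) 1 := by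
  have := Fact.mk hn
  have hk : ((2 * k + 1 : ℕ) : ZMod n) = 0 := by rw [← hnk, ZMod.natCast_self]
  push_cast at hk
  rw [show (3 * n - 2) + (3 * n - 2) / 2 = (n - 1) * 3 + k * 3 + 1 by omega]
  refine (((TraversalFactorization.pairBlocks (by simp) (by simp) (by simp)).nsmul (n - 1)).add
    ((TraversalFactorization.pairBlocks (by simp) (by simp) (by simp)).nsmul k)).add
    (.transversal ?_ ?_)
  · intro i; fin_cases i <;> simp [oddTransversal]
  · ext j
    fin_cases j <;> simp [oddTransversal, Fin.sum_univ_three]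
    all_goals grind

theorem traversalFactorization_evenU (hnk : n = 2 * k + 2) :
    TraversalFactorization (evenU n k) ((3 * n - 2) + (3 * n - 2) / 2) 0 := by
  have : Fact (1 < n) := ⟨by omega⟩
  rw [show (3 * n - 2) + (3 * n - 2) / 2 = (n - 1) * 3 + k * 3 + 3 by omega]
  exact (((TraversalFactorization.pairBlocks (by simp) (by simp) (by simp)).nsmul (n - 1)).add
    ((TraversalFactorization.pairBlocks (by simp) (by simp) (by simp)).nsmul k)).add
    (.pairBlocks (by simp) (by simp) (by simp))

end Construction

theorem stmt16 (n : ℕ) (hn : 2 ≤ n) :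
    (∃ U : Fin 3 → Multiset (Fin 3 → ZMod n), (∀ i, MinZeroSum (U i)) ∧
      ((Odd n → TraversalFactorization U ((3 * n - 2) + (3 * n - 2) / 2) 1) ∧
       (Even n → TraversalFactorization U ((3 * n - 2) + (3 * n - 2) / 2) 0))) ∧
    (3 * n - 2) + (3 * n - 2) / 2 ≤ rho (Fin 3 → ZMod n) 3 := by
  have : NeZero n := ⟨by omega⟩
  rcases Nat.even_or_odd n with heven | hodd
  · obtain ⟨k, hnk⟩ : ∃ k, n = 2 * k + 2 := by
      obtain ⟨r, hr⟩ := heven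
      exact ⟨r - 1, by omega⟩
    have hU := minZeroSum_evenU hnk
    have htf := traversalFactorization_evenU hnk
    exact ⟨⟨evenU n k, hU, fun hodd => absurd heven (Nat.not_even_iff_odd.mpr hodd),
      fun _ => htf⟩, htf.le_rho hU⟩
  · obtain ⟨k, hnk⟩ := hodd
    have hU := minZeroSum_oddU hnk
    have htf := traversalFactorization_oddU hn hnk
    exact ⟨⟨oddU n k, hU, fun _ => htf,
      fun heven => absurd heven (Nat.not_even_iff_odd.mpr ⟨k, hnk⟩)⟩, htf.le_rho hU⟩
end
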